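/- Let rels₁ ⊆ FreeGroup ℕ be the set of elements of the form (of i) * (of j) * ((of (σ i j)) * (of (γ j i)))⁻¹ for all i, j : ℕ with j ≠ i + 1, and let rels₂ ⊆ FreeGroup ℕ be the set of elements of the form (of n) * (of k) * ((of k) * (of (n + 1)))⁻¹ for all n, k : ℕ with k < n. Then the presented groups PresentedGroup rels₁ and PresentedGroup rels₂ are isomorphic as groups. (The first is the structure group G(X, r) of the Thompson partial solution; the second is the infinite presentation ⟨x₀, x₁, x₂, … | xₙxₖ = xₖxₙ₊₁, k < n⟩ of Thompson's group F, so G(X, r) ≅ F.) -/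

import Mathlib

/-- `σ n k = k` if `k ≤ n`, `k - 1` otherwise. -/
def sigma' (n k : ℕ) : ℕ := if k ≤ n then k else k - 1

/-- `γ n k = k` if `k ≤ n`, `k + 1` otherwise. -/
def gamma' (n k : ℕ) : ℕ := if k ≤ n then k else k + 1

/-- Relators of the structure group of the Thompson partial solution:
`x_i x_j (x_{σ_i(j)} x_{γ_j(i)})⁻¹` for `j ≠ i + 1`. -/
def rels₁ : Set (FreeGroup ℕ) :=
  {w | ∃ i j : ℕ, j ≠ i + 1 ∧
    w = FreeGroup.of i * FreeGroup.of j *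
        (FreeGroup.of (sigma' i j) * FreeGroup.of (gamma' j i))⁻¹}

/-- Relators of the infinite presentation of Thompson's group `F`:
`x_n x_k (x_k x_{n+1})⁻¹` for `k < n`. -/
def rels₂ : Set (FreeGroup ℕ) :=
  {w | ∃ n k : ℕ, k < n ∧
    w = FreeGroup.of n * FreeGroup.of k *
        (FreeGroup.of k * FreeGroup.of (n + 1))⁻¹}

/-!
For `j < i` the relation `x_i x_j = x_{σ i j} x_{γ j i}` reads `x_i x_j = x_j x_{i+1}`, which is
the defining relation of `F`; for `j = i` it is trivial; and for `j ≥ i + 2` it reads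
`x_i x_j = x_{j-1} x_i`, the relation of `F` for `(n, k) = (j - 1, i)` read backwards. Hence both
relator sets have the same normal closure in the free group, and the two presented groups are the
same quotient of it.
-/

open FreeGroup

lemma sigma'_of_le {n k : ℕ} (h : k ≤ n) : sigma' n k = k := if_pos h

lemma sigma'_of_lt {n k : ℕ} (h : n < k) : sigma' n k = k - 1 := if_neg h.not_ge

lemma gamma'_of_le {n k : ℕ} (h : k ≤ n) : gamma' n k = k := if_pos h

lemma gamma'_of_lt {n k : ℕ} (h : n < k) : gamma' n k = k + 1 := if_neg h.not_ge

lemma rels₂_subset_rels₁ : rels₂ ⊆ rels₁ := by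
  rintro w ⟨n, k, hkn, rfl⟩
  refine ⟨n, k, by omega, ?_⟩
  rw [sigma'_of_le hkn.le, gamma'_of_lt hkn]

lemma rels₁_subset_normalClosure_rels₂ : rels₁ ⊆ Subgroup.normalClosure rels₂ := by
  rintro w ⟨i, j, hj, rfl⟩
  rcases lt_trichotomy j i with hji | rfl | hij
  · exact Subgroup.subset_normalClosure ⟨i, j, hji, by rw [sigma'_of_le hji.le, gamma'_of_lt hji]⟩
  · rw [sigma'_of_le le_rfl, gamma'_of_le le_rfl, mul_inv_cancel]
    exact one_mem _
  · have hrel : of (j - 1) * of i * (of i * of (j - 1 + 1))⁻¹ ∈ rels₂ := ⟨j - 1, i, by omega, rfl⟩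
    rw [Nat.sub_add_cancel (by omega)] at hrel
    rw [sigma'_of_lt hij, gamma'_of_le hij.le, SetLike.mem_coe]
    convert inv_mem (Subgroup.subset_normalClosure hrel) using 1
    group

/-- The structure group `G(X, r)` of the Thompson partial solution is isomorphic to
Thompson's group `F` (given by its infinite presentation). -/
theorem structure_group_iso_thompsonF :
    Nonempty (PresentedGroup rels₁ ≃* PresentedGroup rels₂) :=
  ⟨QuotientGroup.quotientMulEquivOfEq <| le_antisymm
    (Subgroup.normalClosure_le_normal rels₁_subset_normalClosure_rels₂)
    (Subgroup.normalClosure_mono rels₂_subset_rels₁)⟩
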